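/- Two fibered morphisms F, G : R^q × R^p → R^q × R^p (over the same base maps) have the same (R,S,Q)-jet at y (with R ≤ min(S,Q)) if and only if they have (S,Q)-multiorder contact modulo the multifoliation {F₁, F₂} at y together with the same R-jet at y; in particular equality of the (S,Q)-jet modulo {F₁,F₂} follows from equality of the (R,S,Q)-jet. -/

import Mathlib

/-! The fiber restriction `v ↦ F (x₀, v)` takes values in `ℝ^q × ℝ^p` with constant first
component `F₀ x₀`, so its jets are the jets of its second component once the base values
`F₀ x₀ = G₀ x₀` agree, which the `0`-jet of `F` provides. The base component `z ↦ (F z).1` is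
`F₀ ∘ Prod.fst`, and composing a multilinear map with `Prod.fst` loses nothing because
`Prod.fst ∘ Prod.inl = id`. -/

section

variable {𝕜 : Type*} [NontriviallyNormedField 𝕜]
  {E : Type*} [NormedAddCommGroup E] [NormedSpace 𝕜 E]
  {F : Type*} [NormedAddCommGroup F] [NormedSpace 𝕜 F]
  {G : Type*} [NormedAddCommGroup G] [NormedSpace 𝕜 G]
  {n : WithTop ℕ∞} {i : ℕ}

theorem iteratedFDeriv_eq_iff_fst_and_snd {f g : E → F × G} {x : E}
    (hf : ContDiffAt 𝕜 n f x) (hg : ContDiffAt 𝕜 n g x) (hi : i ≤ n) :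
    iteratedFDeriv 𝕜 i f x = iteratedFDeriv 𝕜 i g x ↔
      iteratedFDeriv 𝕜 i (fun y => (f y).1) x = iteratedFDeriv 𝕜 i (fun y => (g y).1) x ∧
      iteratedFDeriv 𝕜 i (fun y => (f y).2) x = iteratedFDeriv 𝕜 i (fun y => (g y).2) x := by
  rw [ContinuousMultilinearMap.prod_ext_iff,
    ← (ContinuousLinearMap.fst 𝕜 F G).iteratedFDeriv_comp_left hf hi,
    ← (ContinuousLinearMap.fst 𝕜 F G).iteratedFDeriv_comp_left hg hi,
    ← (ContinuousLinearMap.snd 𝕜 F G).iteratedFDeriv_comp_left hf hi,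
    ← (ContinuousLinearMap.snd 𝕜 F G).iteratedFDeriv_comp_left hg hi]
  rfl

theorem iteratedFDeriv_comp_fst_eq_iff {f g : E → F} (hf : ContDiff 𝕜 n f) (hg : ContDiff 𝕜 n g)
    (z : E × G) (hi : i ≤ n) :
    iteratedFDeriv 𝕜 i (f ∘ Prod.fst) z = iteratedFDeriv 𝕜 i (g ∘ Prod.fst) z ↔
      iteratedFDeriv 𝕜 i f z.1 = iteratedFDeriv 𝕜 i g z.1 := by
  have comp_fst {k : E → F} (hk : ContDiff 𝕜 n k) : iteratedFDeriv 𝕜 i (k ∘ Prod.fst) z =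
      (iteratedFDeriv 𝕜 i k z.1).compContinuousLinearMap fun _ => ContinuousLinearMap.fst 𝕜 E G :=
    (ContinuousLinearMap.fst 𝕜 E G).iteratedFDeriv_comp_right hk z hi
  rw [comp_fst hf, comp_fst hg]
  refine ⟨fun h => ?_, fun h => by rw [h]⟩
  ext m
  simpa using congrArg (fun L => L fun j => (m j, (0 : G))) h

theorem ContDiff.of_fst_eq_comp_fst {K : Type*} [NormedAddCommGroup K] [NormedSpace 𝕜 K]
    {H : E × F → G × K} {H₀ : E → G} (hH : ContDiff 𝕜 n H)
    (hb : ∀ z, (H z).1 = H₀ z.1) : ContDiff 𝕜 n H₀ := by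
  have hH₀ : H₀ = fun x => (H (x, 0)).1 := funext fun x => (hb (x, 0)).symm
  rw [hH₀]
  exact (hH.comp (contDiff_id.prodMk contDiff_const)).fst

end

theorem RSQjet_iff_SQjet_mod_multifoliation_general (q p R S Q : ℕ)
    (F G : (Fin q → ℝ) × (Fin p → ℝ) → (Fin q → ℝ) × (Fin p → ℝ))
    (F₀ G₀ : (Fin q → ℝ) → (Fin q → ℝ))
    (hF : ContDiff ℝ (⊤ : ℕ∞) F) (hG : ContDiff ℝ (⊤ : ℕ∞) G)
    (hFb : ∀ z, (F z).1 = F₀ z.1) (hGb : ∀ z, (G z).1 = G₀ z.1)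
    (y₀ : (Fin q → ℝ) × (Fin p → ℝ)) :
    ((∀ s ≤ R, iteratedFDeriv ℝ s F y₀ = iteratedFDeriv ℝ s G y₀) ∧
     (∀ s ≤ S, iteratedFDeriv ℝ s (fun v => F (y₀.1, v)) y₀.2 =
                iteratedFDeriv ℝ s (fun v => G (y₀.1, v)) y₀.2) ∧
     (∀ s ≤ Q, iteratedFDeriv ℝ s F₀ y₀.1 = iteratedFDeriv ℝ s G₀ y₀.1)) ↔
    ((∀ s ≤ R, iteratedFDeriv ℝ s F y₀ = iteratedFDeriv ℝ s G y₀) ∧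
     (∀ s ≤ S, iteratedFDeriv ℝ s (fun v => (F (y₀.1, v)).2) y₀.2 =
                iteratedFDeriv ℝ s (fun v => (G (y₀.1, v)).2) y₀.2) ∧
     (∀ s ≤ Q, iteratedFDeriv ℝ s (fun z => (F z).1) y₀ =
                iteratedFDeriv ℝ s (fun z => (G z).1) y₀)) := by
  have hs : ∀ s : ℕ, (s : WithTop ℕ∞) ≤ (⊤ : ℕ∞) := fun s => mod_cast le_top
  have hFfib : ContDiff ℝ (⊤ : ℕ∞) fun v => F (y₀.1, v) :=
    hF.comp (contDiff_const.prodMk contDiff_id)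
  have hGfib : ContDiff ℝ (⊤ : ℕ∞) fun v => G (y₀.1, v) :=
    hG.comp (contDiff_const.prodMk contDiff_id)
  have hFst : (fun z => (F z).1) = F₀ ∘ Prod.fst := funext hFb
  have hGst : (fun z => (G z).1) = G₀ ∘ Prod.fst := funext hGb
  refine and_congr_right fun hR => and_congr (forall₂_congr fun s _ => ?_)
    (forall₂_congr fun s _ => ?_)
  · have hval : F y₀ = G y₀ := congrArg (fun L => L 0) (hR 0 R.zero_le)
    have hfib₁ : (fun v => (F (y₀.1, v)).1) = fun v => (G (y₀.1, v)).1 := by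
      funext v
      rw [hFb, hGb, ← hFb y₀, ← hGb y₀, hval]
    rw [iteratedFDeriv_eq_iff_fst_and_snd hFfib.contDiffAt hGfib.contDiffAt (hs s), hfib₁]
    exact and_iff_right rfl
  · rw [hFst, hGst, iteratedFDeriv_comp_fst_eq_iff (hF.of_fst_eq_comp_fst hFb)
      (hG.of_fst_eq_comp_fst hGb) y₀ (hs s)]

/-- For fibered morphisms `F, G : ℝ^q × ℝ^p → ℝ^q × ℝ^p` (over base maps `F₀, G₀`),
with `R ≤ min (S, Q)`: `F` and `G` have the same `(R,S,Q)`-jet at `y₀` (same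
`R`-jet, same `S`-jet of the fiber restrictions, same `Q`-jet of the base maps)
iff they have `(S,Q)`-multiorder contact at `y₀` modulo the multifoliation
`{F₁, F₂}` of `ℝ^q × ℝ^p` (order-`S` contact of the `α² = snd` components along
the fiber, order-`Q` contact of the `α¹ = fst` components) together with the
same `R`-jet at `y₀`. In particular, equality of `(R,S,Q)`-jets implies equality
of the `(S,Q)`-jets modulo `{F₁, F₂}`. -/
theorem RSQjet_iff_SQjet_mod_multifoliation (q p R S Q : ℕ)
    (hRS : R ≤ S) (hRQ : R ≤ Q)
    (F G : (Fin q → ℝ) × (Fin p → ℝ) → (Fin q → ℝ) × (Fin p → ℝ))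
    (F₀ G₀ : (Fin q → ℝ) → (Fin q → ℝ))
    (hF : ContDiff ℝ (⊤ : ℕ∞) F) (hG : ContDiff ℝ (⊤ : ℕ∞) G)
    (hF₀ : ContDiff ℝ (⊤ : ℕ∞) F₀) (hG₀ : ContDiff ℝ (⊤ : ℕ∞) G₀)
    (hFb : ∀ z, (F z).1 = F₀ z.1) (hGb : ∀ z, (G z).1 = G₀ z.1)
    (y₀ : (Fin q → ℝ) × (Fin p → ℝ)) :
    ((∀ s ≤ R, iteratedFDeriv ℝ s F y₀ = iteratedFDeriv ℝ s G y₀) ∧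
     (∀ s ≤ S, iteratedFDeriv ℝ s (fun v => F (y₀.1, v)) y₀.2 =
                iteratedFDeriv ℝ s (fun v => G (y₀.1, v)) y₀.2) ∧
     (∀ s ≤ Q, iteratedFDeriv ℝ s F₀ y₀.1 = iteratedFDeriv ℝ s G₀ y₀.1)) ↔
    ((∀ s ≤ R, iteratedFDeriv ℝ s F y₀ = iteratedFDeriv ℝ s G y₀) ∧
     (∀ s ≤ S, iteratedFDeriv ℝ s (fun v => (F (y₀.1, v)).2) y₀.2 =
                iteratedFDeriv ℝ s (fun v => (G (y₀.1, v)).2) y₀.2) ∧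
     (∀ s ≤ Q, iteratedFDeriv ℝ s (fun z => (F z).1) y₀ =
                iteratedFDeriv ℝ s (fun z => (G z).1) y₀)) :=
  RSQjet_iff_SQjet_mod_multifoliation_general q p R S Q F G F₀ G₀ hF hG hFb hGb y₀
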